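/- arXiv:1601.04274 — 2 statements merged into one kernel-verified Lean document; each statement's English description precedes it below -/
import Mathlib

section
/- Let (ξ_k, η_k), k ≥ 1, be i.i.d. copies of a vector (ξ, η) with positive components and m := E[ξ] < ∞. Define the perturbed random walk T_k = S_{k-1} + η_k (where Sₙ = ξ₁ + ⋯ + ξₙ, S₀ = 0) and N(x) = Σ_{k≥1} 1{T_k ≤ x}. Then almost surely, sup_{t ∈ [0,1]} | m·(N(n) - N(n(1-t)−))/n − t | → 0 as n → ∞, where N(x−) denotes the left limit. -/
/-!
Write `S_k` for the partial sums of the `ξ_i` and `ν(x) = inf {k : S_k > x}` for the first-passage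
index. Since every `η_k` is nonnegative, `N(x−) ≤ N(x) ≤ ν(x)`; conversely every `k < ν(x - j)` with
`η_k < j` contributes to `N(x−)`. By the strong law of large numbers `S_k / k → m`, hence
`ν(x) / x → 1 / m`, and the frequency of the indices with `η_k < j` tends to `P(η < j)`, which is
close to `1` for large `j`. So `N(x) / x` and `N(x−) / x` both tend to `1 / m`, and
`t ↦ m (N(n) - N(n(1 - t)−)) / n` converges to `t` for each `t`. These functions are nondecreasing
in `t` and the limit is continuous, so the convergence is uniform on `[0, 1]`.
-/

open MeasureTheory ProbabilityTheory Filter Set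
open scoped ENNReal

noncomputable def partialSum {Ω : Type*} (ξ : ℕ → Ω → ℝ) (n : ℕ) (ω : Ω) : ℝ :=
  ∑ i ∈ Finset.range n, ξ i ω

/-- Points of the perturbed random walk: `T_{k+1} = S_k + η_{k+1}`, `0`-indexed. -/
noncomputable def prwPoint {Ω : Type*} (ξ η : ℕ → Ω → ℝ) (k : ℕ) (ω : Ω) : ℝ :=
  partialSum ξ k ω + η k ω

/-- `N(x) = #{k : T_k ≤ x}`, as an `ℝ≥0∞`-valued count. -/
noncomputable def prwCount {Ω : Type*} (ξ η : ℕ → Ω → ℝ) (x : ℝ) (ω : Ω) : ℝ≥0∞ :=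
  ∑' k : ℕ, if prwPoint ξ η k ω ≤ x then (1 : ℝ≥0∞) else 0

/-- The left limit `N(x−) = #{k : T_k < x}`, as an `ℝ≥0∞`-valued count. -/
noncomputable def prwCountLeft {Ω : Type*} (ξ η : ℕ → Ω → ℝ) (x : ℝ) (ω : Ω) : ℝ≥0∞ :=
  ∑' k : ℕ, if prwPoint ξ η k ω < x then (1 : ℝ≥0∞) else 0

open Topology

section UniformOfMonotone

lemma exists_nat_div_le_le_succ_div {M : ℕ} (hM : 0 < M) {t : ℝ} (ht : t ∈ Icc (0 : ℝ) 1) :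
    ∃ i < M, (i : ℝ) / M ≤ t ∧ t ≤ ((i + 1 : ℕ) : ℝ) / M := by
  have hM' : (0 : ℝ) < M := by exact_mod_cast hM
  rcases ht.2.lt_or_eq with ht1 | rfl
  · refine ⟨⌊t * M⌋₊, ?_, ?_, ?_⟩
    · exact (Nat.floor_lt (by nlinarith [ht.1])).2 (by nlinarith)
    · rw [div_le_iff₀ hM']
      exact Nat.floor_le (by nlinarith [ht.1])
    · rw [le_div_iff₀ hM']
      push_cast
      exact (Nat.lt_floor_add_one _).le
  · refine ⟨M - 1, by omega, ?_, ?_⟩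
    · rw [div_le_one hM']
      exact_mod_cast Nat.sub_le M 1
    · rw [Nat.sub_add_cancel hM, div_self hM'.ne']

variable {ι : Type*} {l : Filter ι}

theorem tendstoUniformlyOn_Icc_of_monotoneOn {g : ι → ℝ → ℝ}
    (hmono : ∀ n, MonotoneOn (g n) (Icc 0 1))
    (hlim : ∀ t ∈ Icc (0 : ℝ) 1, Tendsto (fun n => g n t) l (𝓝 t)) :
    TendstoUniformlyOn g id l (Icc 0 1) := by
  rw [Metric.tendstoUniformlyOn_iff]
  intro ε hε
  obtain ⟨M, hM⟩ := exists_nat_gt (2 / ε)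
  have hM0 : (0 : ℝ) < M := (div_pos two_pos hε).trans hM
  have hmesh : 1 / (M : ℝ) < ε / 2 := by
    rw [div_lt_iff₀ hM0]
    rw [div_lt_iff₀ hε] at hM
    linarith
  have hgrid_mem : ∀ i ≤ M, (i : ℝ) / M ∈ Icc (0 : ℝ) 1 := fun i hi =>
    ⟨by positivity, (div_le_one hM0).2 (by exact_mod_cast hi)⟩
  have hgrid : ∀ᶠ n in l, ∀ i ∈ Finset.range (M + 1), dist (g n (i / M)) (i / M) < ε / 2 := by
    rw [eventually_all_finset]
    intro i hi
    exact Metric.tendsto_nhds.1 (hlim _ (hgrid_mem i (Finset.mem_range_succ_iff.1 hi))) _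
      (half_pos hε)
  filter_upwards [hgrid] with n hn t ht
  obtain ⟨i, hiM, hit, hti⟩ := exists_nat_div_le_le_succ_div (by exact_mod_cast hM0) ht
  have hbelow := hmono n (hgrid_mem i hiM.le) ht hit
  have habove := hmono n ht (hgrid_mem (i + 1) hiM) hti
  have hlow := abs_lt.1 (Real.dist_eq _ _ ▸ hn i (Finset.mem_range.2 (by omega)))
  have hup := abs_lt.1 (Real.dist_eq _ _ ▸ hn (i + 1) (Finset.mem_range.2 (by omega)))
  have hstep : ((i + 1 : ℕ) : ℝ) / M = i / M + 1 / M := by push_cast; ring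
  rw [Real.dist_eq, abs_lt, id]
  constructor <;> linarith

theorem tendsto_iSup_abs_sub_of_tendstoUniformlyOn {α : Type*} {s : Set α} {F : ι → α → ℝ}
    {f : α → ℝ} (h : TendstoUniformlyOn F f l s) :
    Tendsto (fun n => ⨆ x : s, |F n x - f x|) l (𝓝 0) := by
  rw [Metric.tendsto_nhds]
  intro ε hε
  filter_upwards [Metric.tendstoUniformlyOn_iff.1 h (ε / 2) (half_pos hε)] with n hn
  have hsup : (⨆ x : s, |F n x - f x|) ≤ ε / 2 :=
    Real.iSup_le (fun x => by rw [abs_sub_comm, ← Real.dist_eq]; exact (hn x x.2).le)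
      (half_pos hε).le
  rw [Real.dist_0_eq_abs, abs_of_nonneg (Real.iSup_nonneg fun _ => abs_nonneg _)]
  linarith

end UniformOfMonotone

section FirstPassage

variable {a : ℕ → ℝ} {m : ℝ}

lemma tendsto_atTop_of_tendsto_div_natCast (hal : Tendsto (fun n : ℕ => a n / n) atTop (𝓝 m))
    (hm : 0 < m) : Tendsto a atTop atTop := by
  refine (hal.pos_mul_atTop hm tendsto_natCast_atTop_atTop).congr' ?_
  filter_upwards [eventually_ne_atTop 0] with n hn
  exact div_mul_cancel₀ _ (Nat.cast_ne_zero.2 hn)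

lemma tendsto_div_natCast_add_one (hal : Tendsto (fun n : ℕ => a n / n) atTop (𝓝 m)) :
    Tendsto (fun n : ℕ => a n / (n + 1)) atTop (𝓝 m) := by
  have := hal.mul (tendsto_natCast_div_add_atTop (1 : ℝ))
  rw [mul_one] at this
  refine this.congr' ?_
  filter_upwards [eventually_ne_atTop 0] with n hn
  field_simp

noncomputable def firstPassage (a : ℕ → ℝ) (x : ℝ) : ℕ := sInf {k | x < a k}

lemma lt_apply_firstPassage (haT : Tendsto a atTop atTop) (x : ℝ) :
    x < a (firstPassage a x) :=
  Nat.sInf_mem (haT.eventually_gt_atTop x).exists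

lemma apply_le_of_lt_firstPassage {x : ℝ} {k : ℕ} (hk : k < firstPassage a x) : a k ≤ x :=
  not_lt.1 (Nat.notMem_of_lt_sInf hk)

lemma apply_le_iff_lt_firstPassage (ha : Monotone a) (haT : Tendsto a atTop atTop) {x : ℝ}
    {k : ℕ} : a k ≤ x ↔ k < firstPassage a x :=
  ⟨fun hk => lt_of_not_ge fun h => (lt_apply_firstPassage haT x).not_ge ((ha h).trans hk),
    apply_le_of_lt_firstPassage⟩

lemma setOf_apply_le_eq_range (ha : Monotone a) (haT : Tendsto a atTop atTop) (x : ℝ) :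
    {k | a k ≤ x} = Finset.range (firstPassage a x) := by
  ext k
  simp [apply_le_iff_lt_firstPassage ha haT]

lemma finite_setOf_apply_le (ha : Monotone a) (haT : Tendsto a atTop atTop) (x : ℝ) :
    {k | a k ≤ x}.Finite := by
  rw [setOf_apply_le_eq_range ha haT]
  exact Finset.finite_toSet _

lemma ncard_setOf_apply_le (ha : Monotone a) (haT : Tendsto a atTop atTop) (x : ℝ) :
    {k | a k ≤ x}.ncard = firstPassage a x := by
  rw [setOf_apply_le_eq_range ha haT, ncard_coe_finset, Finset.card_range]

lemma tendsto_firstPassage_atTop (ha : Monotone a) (haT : Tendsto a atTop atTop) :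
    Tendsto (firstPassage a) atTop atTop :=
  tendsto_atTop.2 fun K => by
    filter_upwards [eventually_ge_atTop (a K)] with x hx
    exact ((apply_le_iff_lt_firstPassage ha haT).1 hx).le

theorem tendsto_firstPassage_div (ha : Monotone a) (hm : 0 < m)
    (hal : Tendsto (fun n : ℕ => a n / n) atTop (𝓝 m)) :
    Tendsto (fun x => (firstPassage a x : ℝ) / x) atTop (𝓝 m⁻¹) := by
  have haT := tendsto_atTop_of_tendsto_div_natCast hal hm
  have hν := tendsto_firstPassage_atTop ha haT
  have hν1 : ∀ᶠ x in atTop, 1 ≤ firstPassage a x := hν.eventually_ge_atTop 1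
  -- `x` lies between `a (ν x - 1)` and `a (ν x)`
  have hprev : Tendsto (fun x => a (firstPassage a x - 1) / firstPassage a x) atTop (𝓝 m) := by
    refine ((tendsto_div_natCast_add_one hal).comp ((tendsto_sub_atTop_nat 1).comp hν)).congr' ?_
    filter_upwards [hν1] with x hx
    simp [Nat.cast_sub hx]
  have hnext : Tendsto (fun x => a (firstPassage a x) / firstPassage a x) atTop (𝓝 m) :=
    hal.comp hν
  have hratio : Tendsto (fun x => x / firstPassage a x) atTop (𝓝 m) := by
    refine tendsto_of_tendsto_of_tendsto_of_le_of_le' hprev hnext ?_ ?_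
    · filter_upwards [hν1] with x hx
      exact div_le_div_of_nonneg_right
        (apply_le_of_lt_firstPassage (Nat.sub_lt hx one_pos)) (Nat.cast_nonneg _)
    · exact Eventually.of_forall fun x =>
        div_le_div_of_nonneg_right (lt_apply_firstPassage haT x).le (Nat.cast_nonneg _)
  simpa using hratio.inv₀ hm.ne'

theorem tendsto_card_filter_range_firstPassage_div (ha : Monotone a) (hm : 0 < m)
    (hal : Tendsto (fun n : ℕ => a n / n) atTop (𝓝 m)) {p : ℕ → Prop} [DecidablePred p] {q : ℝ}
    (hp : Tendsto (fun K : ℕ => (((Finset.range K).filter p).card : ℝ) / K) atTop (𝓝 q))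
    (y : ℝ) :
    Tendsto (fun x => (((Finset.range (firstPassage a (x - y))).filter p).card : ℝ) / x) atTop
      (𝓝 (q * m⁻¹)) := by
  have hshift : Tendsto (fun x : ℝ => x - y) atTop atTop :=
    tendsto_atTop_add_const_right _ _ tendsto_id
  have hν := tendsto_firstPassage_atTop ha (tendsto_atTop_of_tendsto_div_natCast hal hm)
  have hrel : Tendsto (fun x : ℝ => (x - y) / x) atTop (𝓝 1) := by
    have := tendsto_const_nhds (x := (1 : ℝ)).sub
      (tendsto_const_nhds (x := y).div_atTop tendsto_id)
    rw [sub_zero] at this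
    refine this.congr' ?_
    filter_upwards [eventually_gt_atTop 0] with x hx
    simp only [id]
    field_simp
  have := ((hp.comp (hν.comp hshift)).mul
    ((tendsto_firstPassage_div ha hm hal).comp hshift)).mul hrel
  rw [mul_one] at this
  refine this.congr' ?_
  filter_upwards [(hν.comp hshift).eventually_ne_atTop 0, eventually_gt_atTop (max y 0)]
    with x hx hxy
  have hν0 : (firstPassage a (x - y) : ℝ) ≠ 0 := Nat.cast_ne_zero.2 hx
  have : x - y ≠ 0 := by linarith [le_max_left y 0]
  have : x ≠ 0 := by linarith [le_max_right y 0]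
  simp only [Function.comp_apply]
  field_simp

end FirstPassage

lemma tendsto_comp_natCast_mul_div {f : ℝ → ℝ} {L : ℝ}
    (hf : Tendsto (fun x => f x / x) atTop (𝓝 L)) {s : ℝ} (hs : 0 ≤ s) :
    Tendsto (fun n : ℕ => f (n * s) / n) atTop (𝓝 (s * L)) := by
  rcases hs.eq_or_lt with rfl | hs
  · simpa using tendsto_const_div_atTop_nhds_zero_nat (f 0)
  have := (hf.comp (tendsto_natCast_atTop_atTop.atTop_mul_const hs)).const_mul s
  refine this.congr' ?_
  filter_upwards [eventually_ne_atTop 0] with n hn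
  have : (n : ℝ) ≠ 0 := Nat.cast_ne_zero.2 hn
  simp only [Function.comp_apply]
  field_simp

section PerturbedCount

variable {a b : ℕ → ℝ} {m : ℝ}

theorem tendsto_div_of_card_filter_le_of_le_firstPassage (ha : Monotone a) (hm : 0 < m)
    (hal : Tendsto (fun n : ℕ => a n / n) atTop (𝓝 m)) {F : ℕ → ℝ} (hF : Tendsto F atTop (𝓝 1))
    (hfreq : ∀ j : ℕ,
      Tendsto (fun K : ℕ => (((Finset.range K).filter (b · < j)).card : ℝ) / K) atTop (𝓝 (F j)))
    {f : ℝ → ℝ}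
    (hlow : ∀ x (j : ℕ),
      (((Finset.range (firstPassage a (x - j))).filter (b · < j)).card : ℝ) ≤ f x)
    (hup : ∀ x, f x ≤ firstPassage a x) :
    Tendsto (fun x => f x / x) atTop (𝓝 m⁻¹) := by
  refine tendsto_order.2 ⟨fun c hc => ?_, fun c hc => ?_⟩
  · obtain ⟨j, hj⟩ :=
      ((hF.mul_const m⁻¹).eventually (lt_mem_nhds (by rwa [one_mul]))).exists
    filter_upwards [(tendsto_card_filter_range_firstPassage_div ha hm hal (hfreq j) j).eventually
      (lt_mem_nhds hj), eventually_gt_atTop 0] with x hx hx0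
    exact hx.trans_le (div_le_div_of_nonneg_right (hlow x j) hx0.le)
  · filter_upwards [(tendsto_firstPassage_div ha hm hal).eventually (gt_mem_nhds hc),
      eventually_gt_atTop 0] with x hx hx0
    exact (div_le_div_of_nonneg_right (hup x) hx0.le).trans_lt hx

lemma setOf_add_le_subset (hb : ∀ k, 0 ≤ b k) (x : ℝ) :
    {k | a k + b k ≤ x} ⊆ {k | a k ≤ x} :=
  ofPred_subset_ofPred.2 fun k hk => by linarith [hb k]

lemma finite_setOf_add_le (ha : Monotone a) (haT : Tendsto a atTop atTop) (hb : ∀ k, 0 ≤ b k)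
    (x : ℝ) : {k | a k + b k ≤ x}.Finite :=
  (finite_setOf_apply_le ha haT x).subset (setOf_add_le_subset hb x)

lemma finite_setOf_add_lt (ha : Monotone a) (haT : Tendsto a atTop atTop) (hb : ∀ k, 0 ≤ b k)
    (x : ℝ) : {k | a k + b k < x}.Finite :=
  (finite_setOf_add_le ha haT hb x).subset (ofPred_subset_ofPred.2 fun _ => le_of_lt)

lemma ncard_setOf_add_le_le_firstPassage (ha : Monotone a) (haT : Tendsto a atTop atTop)
    (hb : ∀ k, 0 ≤ b k) (x : ℝ) : {k | a k + b k ≤ x}.ncard ≤ firstPassage a x :=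
  ncard_setOf_apply_le ha haT x ▸
    ncard_le_ncard (setOf_add_le_subset hb x) (finite_setOf_apply_le ha haT x)

lemma ncard_setOf_add_lt_le_ncard_setOf_add_le (ha : Monotone a) (haT : Tendsto a atTop atTop)
    (hb : ∀ k, 0 ≤ b k) (x : ℝ) : {k | a k + b k < x}.ncard ≤ {k | a k + b k ≤ x}.ncard :=
  ncard_le_ncard (ofPred_subset_ofPred.2 fun _ => le_of_lt) (finite_setOf_add_le ha haT hb x)

lemma card_filter_le_ncard_setOf_add_lt (ha : Monotone a) (haT : Tendsto a atTop atTop)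
    (hb : ∀ k, 0 ≤ b k) (x : ℝ) (j : ℕ) :
    ((Finset.range (firstPassage a (x - j))).filter (b · < j)).card ≤
      {k | a k + b k < x}.ncard := by
  rw [← ncard_coe_finset]
  refine ncard_le_ncard (fun k hk => ?_) (finite_setOf_add_lt ha haT hb x)
  simp only [Finset.coe_filter, Finset.mem_range, mem_ofPred_eq] at hk ⊢
  linarith [apply_le_of_lt_firstPassage hk.1]

lemma monotone_ncard_setOf_add_lt (ha : Monotone a) (haT : Tendsto a atTop atTop)
    (hb : ∀ k, 0 ≤ b k) : Monotone fun x => {k | a k + b k < x}.ncard :=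
  fun _ y hxy => ncard_le_ncard (ofPred_subset_ofPred.2 fun _ hk => hk.trans_le hxy)
    (finite_setOf_add_lt ha haT hb y)

theorem tendsto_iSup_abs_ncard_sub_ncard_div_sub (ha : Monotone a) (hm : 0 < m)
    (hal : Tendsto (fun n : ℕ => a n / n) atTop (𝓝 m)) (hb : ∀ k, 0 ≤ b k) {F : ℕ → ℝ}
    (hF : Tendsto F atTop (𝓝 1))
    (hfreq : ∀ j : ℕ,
      Tendsto (fun K : ℕ => (((Finset.range K).filter (b · < j)).card : ℝ) / K) atTop (𝓝 (F j))) :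
    Tendsto (fun n : ℕ => ⨆ t : Icc (0 : ℝ) 1,
      |m * (({k | a k + b k ≤ (n : ℝ)}.ncard : ℝ)
        - ({k | a k + b k < (n : ℝ) * (1 - (t : ℝ))}.ncard : ℝ)) / n - (t : ℝ)|)
      atTop (𝓝 0) := by
  have haT := tendsto_atTop_of_tendsto_div_natCast hal hm
  have hle : Tendsto (fun x => ({k | a k + b k ≤ x}.ncard : ℝ) / x) atTop (𝓝 m⁻¹) :=
    tendsto_div_of_card_filter_le_of_le_firstPassage ha hm hal hF hfreq
      (fun x j => Nat.cast_le.2 ((card_filter_le_ncard_setOf_add_lt ha haT hb x j).trans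
        (ncard_setOf_add_lt_le_ncard_setOf_add_le ha haT hb x)))
      (fun x => Nat.cast_le.2 (ncard_setOf_add_le_le_firstPassage ha haT hb x))
  have hlt : Tendsto (fun x => ({k | a k + b k < x}.ncard : ℝ) / x) atTop (𝓝 m⁻¹) :=
    tendsto_div_of_card_filter_le_of_le_firstPassage ha hm hal hF hfreq
      (fun x j => Nat.cast_le.2 (card_filter_le_ncard_setOf_add_lt ha haT hb x j))
      (fun x => Nat.cast_le.2 ((ncard_setOf_add_lt_le_ncard_setOf_add_le ha haT hb x).trans
        (ncard_setOf_add_le_le_firstPassage ha haT hb x)))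
  let g : ℕ → ℝ → ℝ := fun n t =>
    m * (({k | a k + b k ≤ (n : ℝ)}.ncard : ℝ) - ({k | a k + b k < n * (1 - t)}.ncard : ℝ)) / n
  have hg : TendstoUniformlyOn g id atTop (Icc 0 1) := by
    refine tendstoUniformlyOn_Icc_of_monotoneOn (fun n t _ t' _ htt' => ?_) fun t ht => ?_
    · have : ({k | a k + b k < n * (1 - t')}.ncard : ℝ) ≤ {k | a k + b k < n * (1 - t)}.ncard :=
        Nat.cast_le.2 (monotone_ncard_setOf_add_lt ha haT hb (by gcongr))
      simp only [g]
      gcongr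
    · have := ((hle.comp tendsto_natCast_atTop_atTop).sub
        (tendsto_comp_natCast_mul_div hlt (sub_nonneg.2 ht.2))).const_mul m
      rw [show m * (m⁻¹ - (1 - t) * m⁻¹) = t by field_simp; ring] at this
      refine this.congr fun n => ?_
      simp only [Function.comp_apply, g]
      ring
  simpa only [g, id] using tendsto_iSup_abs_sub_of_tendstoUniformlyOn hg

end PerturbedCount

section Probability

variable {Ω : Type*} [MeasurableSpace Ω] {μ : Measure Ω}

lemma integral_pos_of_ae_pos [NeZero μ] {f : Ω → ℝ} (hf : Integrable f μ)
    (hpos : ∀ᵐ ω ∂μ, 0 < f ω) : 0 < ∫ ω, f ω ∂μ := by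
  rw [integral_pos_iff_support_of_nonneg_ae (hpos.mono fun _ h => h.le) hf, pos_iff_ne_zero]
  intro h
  obtain ⟨ω, hω0, hωpos⟩ := ((measure_eq_zero_iff_ae_notMem.1 h).and hpos).exists
  exact hω0 hωpos.ne'

lemma tendsto_measureReal_setOf_lt_natCast [IsProbabilityMeasure μ] (Y : Ω → ℝ) :
    Tendsto (fun j : ℕ => μ.real {ω | Y ω < j}) atTop (𝓝 1) := by
  have hmono : Monotone fun j : ℕ => {ω | Y ω < j} :=
    fun i j hij => ofPred_subset_ofPred.2 fun ω h => h.trans_le (by exact_mod_cast hij)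
  have hunion : (⋃ j : ℕ, {ω | Y ω < j}) = univ :=
    eq_univ_of_forall fun ω => mem_iUnion.2 (exists_nat_gt (Y ω))
  have := tendsto_measure_iUnion_atTop (μ := μ) hmono
  rw [hunion, measure_univ] at this
  exact (ENNReal.tendsto_toReal ENNReal.one_ne_top).comp this

variable {E : Type*} [MeasurableSpace E] {X : ℕ → Ω → E}

theorem strong_law_ae_comp (hindep : iIndepFun X μ) (hid : ∀ i, IdentDistrib (X i) (X 0) μ μ)
    {g : E → ℝ} (hg : Measurable g) (hint : Integrable (g ∘ X 0) μ) :
    ∀ᵐ ω ∂μ, Tendsto (fun n : ℕ => (∑ i ∈ Finset.range n, g (X i ω)) / n) atTop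
      (𝓝 (∫ ω, g (X 0 ω) ∂μ)) :=
  strong_law_ae_real (fun i => g ∘ X i) hint (fun _ _ hij => (hindep.indepFun hij).comp hg hg)
    fun i => (hid i).comp hg

theorem ae_tendsto_card_filter_div [IsFiniteMeasure μ] (hX : Measurable (X 0))
    (hindep : iIndepFun X μ) (hid : ∀ i, IdentDistrib (X i) (X 0) μ μ) {P : E → Prop}
    [DecidablePred P] (hP : MeasurableSet {x | P x}) :
    ∀ᵐ ω ∂μ, Tendsto (fun K : ℕ => (((Finset.range K).filter (P <| X · ω)).card : ℝ) / K) atTop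
      (𝓝 (μ.real {ω | P (X 0 ω)})) := by
  have hg : Measurable fun x => if P x then (1 : ℝ) else 0 :=
    Measurable.ite hP measurable_const measurable_const
  have hint : Integrable ((fun x => if P x then (1 : ℝ) else 0) ∘ X 0) μ :=
    (integrable_const (1 : ℝ)).mono' (hg.comp hX).aestronglyMeasurable
      (ae_of_all _ fun ω => by simp only [Function.comp_apply]; split_ifs <;> simp)
  have hmean : ∫ ω, (if P (X 0 ω) then (1 : ℝ) else 0) ∂μ = μ.real {ω | P (X 0 ω)} := by
    rw [← integral_indicator_one (s := {ω | P (X 0 ω)}) (hX hP)]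
    congr 1 with ω
    simp [indicator_apply]
  filter_upwards [strong_law_ae_comp hindep hid hg hint] with ω hω
  simpa [Finset.sum_boole, hmean] using hω

end Probability

lemma toReal_tsum_ite_one {α : Type*} (p : α → Prop) [DecidablePred p] :
    (∑' k, if p k then (1 : ℝ≥0∞) else 0).toReal = {k | p k}.ncard := by
  have : (∑' k, if p k then (1 : ℝ≥0∞) else 0) = {k | p k}.encard := by
    rw [← ENNReal.tsum_set_one, tsum_subtype {k | p k} (fun _ => (1 : ℝ≥0∞))]
    simp only [indicator_apply, mem_ofPred_eq]
  rw [this, ncard_def]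
  cases {k | p k}.encard <;> simp

lemma toReal_prwCount {Ω : Type*} (ξ η : ℕ → Ω → ℝ) (x : ℝ) (ω : Ω) :
    (prwCount ξ η x ω).toReal = {k | prwPoint ξ η k ω ≤ x}.ncard :=
  toReal_tsum_ite_one _

lemma toReal_prwCountLeft {Ω : Type*} (ξ η : ℕ → Ω → ℝ) (x : ℝ) (ω : Ω) :
    (prwCountLeft ξ η x ω).toReal = {k | prwPoint ξ η k ω < x}.ncard :=
  toReal_tsum_ite_one _

lemma monotone_partialSum {Ω : Type*} {ξ : ℕ → Ω → ℝ} {ω : Ω} (hξ : ∀ i, 0 ≤ ξ i ω) :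
    Monotone fun n => partialSum ξ n ω :=
  monotone_nat_of_le_succ fun n => by
    simpa [partialSum, Finset.sum_range_succ] using hξ n

theorem stmt_10 {Ω : Type*} [MeasurableSpace Ω] (μ : Measure Ω) [IsProbabilityMeasure μ]
    (ξ η : ℕ → Ω → ℝ) (hmeas : ∀ i, Measurable (fun ω => (ξ i ω, η i ω)))
    (hpos : ∀ i, ∀ᵐ ω ∂μ, 0 < ξ i ω ∧ 0 < η i ω)
    (hindep : iIndepFun (fun i ω => (ξ i ω, η i ω)) μ)
    (hid : ∀ i, IdentDistrib (fun ω => (ξ i ω, η i ω)) (fun ω => (ξ 0 ω, η 0 ω)) μ μ)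
    (hint : Integrable (ξ 0) μ) (m : ℝ) (hm : m = ∫ ω, ξ 0 ω ∂μ) :
    ∀ᵐ ω ∂μ, Tendsto
      (fun n : ℕ => ⨆ t : Icc (0:ℝ) 1,
        |m * ((prwCount ξ η (n : ℝ) ω).toReal
              - (prwCountLeft ξ η ((n : ℝ) * (1 - (t : ℝ))) ω).toReal) / (n : ℝ)
          - (t : ℝ)|)
      atTop (nhds 0) := by
  subst hm
  have hm_pos := integral_pos_of_ae_pos hint ((hpos 0).mono fun _ h => h.1)
  have hwalk : ∀ᵐ ω ∂μ,
      Tendsto (fun n : ℕ => partialSum ξ n ω / n) atTop (𝓝 (∫ ω, ξ 0 ω ∂μ)) := by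
    simpa only [partialSum] using strong_law_ae_comp hindep hid measurable_fst hint
  have hfreq (j : ℕ) : ∀ᵐ ω ∂μ, Tendsto
      (fun K : ℕ => (((Finset.range K).filter (η · ω < j)).card : ℝ) / K) atTop
      (𝓝 (μ.real {ω | η 0 ω < j})) := by
    simpa only using ae_tendsto_card_filter_div (hmeas 0) hindep hid (P := fun p => p.2 < j)
      (measurableSet_lt measurable_snd measurable_const)
  filter_upwards [ae_all_iff.2 hpos, hwalk, ae_all_iff.2 hfreq] with ω hposω hwalkω hfreqω
  simp only [toReal_prwCount, toReal_prwCountLeft, prwPoint]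
  exact tendsto_iSup_abs_ncard_sub_ncard_div_sub (a := fun k => partialSum ξ k ω)
    (b := fun k => η k ω) (monotone_partialSum fun i => (hposω i).1.le) hm_pos hwalkω
    (fun k => (hposω k).2.le) (tendsto_measureReal_setOf_lt_natCast (η 0)) hfreqω
end

section
/- Let (ξ_k, η_k) be i.i.d. with positive components, Sₙ = ξ₁ + ⋯ + ξₙ, F(x) = P(η ≤ x), and ν(t) = #{k ≥ 0 : S_k ≤ t}. For integer m ≥ 1 define J(m) = ∫_{[0,m]} (F(m+1−y) − F(m−y)) dν(y). Then J(m) ≤ 1 + 2·max_{0 ≤ k ≤ m−1}(ν(k+1) − ν(k)), and for every δ > 0, m^{-δ} J(m) → 0 almost surely as m → ∞. -/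
open MeasureTheory ProbabilityTheory Filter Real
open scoped ENNReal

/-- `ν(j+1) - ν(j) = #{k ≥ 0 : j < S_k ≤ j+1}`, as an `ℝ≥0∞`-valued count. -/
noncomputable def renewalIncr {Ω : Type*} (ξ : ℕ → Ω → ℝ) (j : ℕ) (ω : Ω) : ℝ≥0∞ :=
  ∑' k : ℕ, if (j : ℝ) < partialSum ξ k ω ∧ partialSum ξ k ω ≤ (j : ℝ) + 1
    then (1 : ℝ≥0∞) else 0

/-- `J(m) = ∫_{[0,m]} (F(m+1−y) − F(m−y)) dν(y)
          = ∑_{k≥0} (F(m+1−S_k) − F(m−S_k)) 1{S_k ≤ m}`. -/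
noncomputable def prwJ {Ω : Type*} (ξ : ℕ → Ω → ℝ) (F : ℝ → ℝ) (m : ℕ) (ω : Ω) : ℝ :=
  ∑' k : ℕ, if partialSum ξ k ω ≤ (m : ℝ)
    then F ((m : ℝ) + 1 - partialSum ξ k ω) - F ((m : ℝ) - partialSum ξ k ω) else 0

section Deterministic

variable {Ω : Type*} {ξ : ℕ → Ω → ℝ} {ω : Ω}

lemma partialSum_pos (hξ : ∀ i, 0 < ξ i ω) {k : ℕ} (hk : k ≠ 0) : 0 < partialSum ξ k ω :=
  Finset.sum_pos (fun i _ => hξ i) (Finset.nonempty_range_iff.mpr hk)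

lemma partialSum_strictMono (hξ : ∀ i, 0 < ξ i ω) : StrictMono fun k => partialSum ξ k ω :=
  strictMono_nat_of_lt_succ fun k => by
    simpa [partialSum, Finset.sum_range_succ] using hξ k

lemma renewalIncr_eq_encard (ξ : ℕ → Ω → ℝ) (j : ℕ) (ω : Ω) :
    renewalIncr ξ j ω = {k | partialSum ξ k ω ∈ Set.Ioc (j : ℝ) (j + 1)}.encard := by
  rw [← ENNReal.tsum_set_one, tsum_subtype _ (fun _ => (1 : ℝ≥0∞)), renewalIncr]
  simp [Set.indicator_apply]

lemma sum_range_sub_add_two_le_two {g : ℕ → ℝ} (h0 : ∀ i, 0 ≤ g i) (h1 : ∀ i, g i ≤ 1)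
    (m : ℕ) : ∑ j ∈ Finset.range m, (g j - g (j + 2)) ≤ 2 := by
  have htel : ∑ j ∈ Finset.range m, (g j - g (j + 2)) = (g 0 - g m) + (g 1 - g (m + 1)) := by
    rw [← Finset.sum_range_sub' g m, ← Finset.sum_range_sub' (fun j => g (j + 1)) m,
      ← Finset.sum_add_distrib]
    exact Finset.sum_congr rfl fun j _ => by ring
  linarith [h0 m, h0 (m + 1), h1 0, h1 1]

noncomputable def prwJTerm (ξ : ℕ → Ω → ℝ) (F : ℝ → ℝ) (m k : ℕ) (ω : Ω) : ℝ :=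
  if partialSum ξ k ω ≤ (m : ℝ)
    then F ((m : ℝ) + 1 - partialSum ξ k ω) - F ((m : ℝ) - partialSum ξ k ω) else 0

lemma prwJ_eq_tsum (ξ : ℕ → Ω → ℝ) (F : ℝ → ℝ) (m : ℕ) (ω : Ω) :
    prwJ ξ F m ω = ∑' k, prwJTerm ξ F m k ω := rfl

lemma prwJTerm_nonneg {F : ℝ → ℝ} (hF : Monotone F) (m k : ℕ) : 0 ≤ prwJTerm ξ F m k ω := by
  unfold prwJTerm
  split_ifs
  · exact sub_nonneg.mpr (hF (by linarith))
  · exact le_rfl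

lemma ofReal_prwJTerm_le {F : ℝ → ℝ} (hF : Monotone F) (hF0 : ∀ x, 0 ≤ F x)
    (hF1 : ∀ x, F x ≤ 1) (hξ : ∀ i, 0 < ξ i ω) (m k : ℕ) :
    ENNReal.ofReal (prwJTerm ξ F m k ω) ≤
      (if k = 0 then 1 else 0) + ∑ j ∈ Finset.range m,
        ENNReal.ofReal (F (m + 1 - j) - F (m + 1 - (j + 2 : ℕ))) *
          if (j : ℝ) < partialSum ξ k ω ∧ partialSum ξ k ω ≤ (j : ℝ) + 1 then 1 else 0 := by
  unfold prwJTerm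
  set s := partialSum ξ k ω
  by_cases hsm : s ≤ m
  swap
  · simp [hsm]
  rw [if_pos hsm]
  rcases eq_or_ne k 0 with rfl | hk
  · have : F (m + 1 - s) - F (m - s) ≤ 1 := by linarith [hF1 (m + 1 - s), hF0 (m - s)]
    exact le_add_right (by simpa using ENNReal.ofReal_le_one.mpr this)
  set j := ⌈s⌉₊ - 1
  have hs0 : 0 < s := partialSum_pos hξ hk
  have hceil : 1 ≤ ⌈s⌉₊ := Nat.one_le_ceil_iff.mpr hs0
  have hj : (j : ℝ) + 1 = ⌈s⌉₊ := by push_cast [j, Nat.cast_sub hceil]; ring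
  have hjs : (j : ℝ) < s ∧ s ≤ j + 1 :=
    ⟨by linarith [Nat.ceil_lt_add_one hs0.le], hj ▸ Nat.le_ceil s⟩
  have hjm : j < m := by
    have : ⌈s⌉₊ ≤ m := Nat.ceil_le.mpr hsm
    omega
  rw [if_neg hk, zero_add]
  refine le_trans ?_ (Finset.single_le_sum (f := fun j => ENNReal.ofReal _ * _)
    (fun _ _ => zero_le) (Finset.mem_range.mpr hjm))
  rw [if_pos hjs, mul_one]
  refine ENNReal.ofReal_le_ofReal ?_
  push_cast
  linarith [hF (show (m : ℝ) + 1 - s ≤ m + 1 - j by linarith),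
    hF (show (m : ℝ) + 1 - (j + 2) ≤ m - s by linarith)]

lemma prwJ_nonneg {F : ℝ → ℝ} (hF : Monotone F) (m : ℕ) : 0 ≤ prwJ ξ F m ω :=
  tsum_nonneg fun k => prwJTerm_nonneg hF m k

lemma prwJ_le {F : ℝ → ℝ} (hF : Monotone F) (hF0 : ∀ x, 0 ≤ F x) (hF1 : ∀ x, F x ≤ 1)
    (hξ : ∀ i, 0 < ξ i ω) {m : ℕ} {M : ℝ} (hM0 : 0 ≤ M)
    (hM : ∀ j < m, renewalIncr ξ j ω ≤ ENNReal.ofReal M) :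
    prwJ ξ F m ω ≤ 1 + 2 * M := by
  set d : ℕ → ℝ := fun j => F (m + 1 - j) - F (m + 1 - (j + 2 : ℕ))
  have hd : ∀ j, 0 ≤ d j := fun j => sub_nonneg.mpr (hF (by push_cast; linarith))
  have hsum_d : ∑ j ∈ Finset.range m, d j ≤ 2 :=
    sum_range_sub_add_two_le_two (g := fun i : ℕ => F (m + 1 - i)) (fun _ => hF0 _)
      (fun _ => hF1 _) m
  have hbound : ∑' k, ENNReal.ofReal (prwJTerm ξ F m k ω) ≤ 1 + ENNReal.ofReal (2 * M) :=
    calc _ ≤ ∑' k : ℕ, ((if k = 0 then 1 else 0) + ∑ j ∈ Finset.range m, ENNReal.ofReal (d j) *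
          if (j : ℝ) < partialSum ξ k ω ∧ partialSum ξ k ω ≤ (j : ℝ) + 1 then 1 else 0) :=
          ENNReal.tsum_le_tsum fun k => ofReal_prwJTerm_le hF hF0 hF1 hξ m k
      _ = 1 + ∑ j ∈ Finset.range m, ENNReal.ofReal (d j) * renewalIncr ξ j ω := by
          rw [ENNReal.tsum_add, tsum_ite_eq, Summable.tsum_finsetSum fun _ _ => ENNReal.summable]
          simp only [ENNReal.tsum_mul_left, renewalIncr]
      _ ≤ 1 + ∑ j ∈ Finset.range m, ENNReal.ofReal (d j) * ENNReal.ofReal M := by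
          gcongr with j hj
          exact hM j (Finset.mem_range.mp hj)
      _ = 1 + ENNReal.ofReal ((∑ j ∈ Finset.range m, d j) * M) := by
          rw [← Finset.sum_mul, ← ENNReal.ofReal_sum_of_nonneg fun j _ => hd j,
            ← ENNReal.ofReal_mul (Finset.sum_nonneg fun j _ => hd j)]
      _ ≤ 1 + ENNReal.ofReal (2 * M) := by gcongr
  calc prwJ ξ F m ω = (∑' k, ENNReal.ofReal (prwJTerm ξ F m k ω)).toReal := by
        simp only [ENNReal.tsum_toReal_eq fun _ => ENNReal.ofReal_ne_top,
          ENNReal.toReal_ofReal (prwJTerm_nonneg hF m _), prwJ_eq_tsum]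
    _ ≤ (1 + ENNReal.ofReal (2 * M)).toReal := ENNReal.toReal_mono (by finiteness) hbound
    _ = 1 + 2 * M := by
        rw [ENNReal.toReal_add ENNReal.one_ne_top ENNReal.ofReal_ne_top,
          ENNReal.toReal_ofReal (by positivity), ENNReal.toReal_one]

end Deterministic

lemma summable_mul_pow_floor_rpow {ρ δ : ℝ} (hρ0 : 0 < ρ) (hρ1 : ρ < 1) (hδ : 0 < δ) :
    Summable fun m : ℕ => (m : ℝ) * ρ ^ ⌊(m : ℝ) ^ δ⌋₊ := by
  set b := -log ρ
  have hb : 0 < b := neg_pos.2 (log_neg hρ0 hρ1)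
  have hpow : ∀ x : ℝ, 0 ≤ x → ρ ^ ⌊x⌋₊ ≤ ρ⁻¹ * exp (-b * x) := by
    intro x hx
    calc ρ ^ ⌊x⌋₊ = ρ ^ (⌊x⌋₊ : ℝ) := (rpow_natCast ρ _).symm
      _ ≤ ρ ^ (x - 1) :=
        rpow_le_rpow_of_exponent_ge hρ0 hρ1.le (by linarith [Nat.lt_floor_add_one x])
      _ = ρ⁻¹ * exp (-b * x) := by
        rw [rpow_sub hρ0, rpow_one, rpow_def_of_pos hρ0]; simp only [b]; ring_nf
  have hlim : Tendsto (fun m : ℕ => (m : ℝ) ^ 3 * exp (-b * (m : ℝ) ^ δ)) atTop (nhds 0) := by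
    have := (tendsto_rpow_mul_exp_neg_mul_atTop_nhds_zero (3 / δ) b hb).comp
      ((tendsto_rpow_atTop hδ).comp tendsto_natCast_atTop_atTop)
    refine this.congr fun m => ?_
    simp only [Function.comp_apply]
    rw [← rpow_mul m.cast_nonneg, mul_div_cancel₀ _ hδ.ne']
    norm_cast
  refine Summable.of_norm_bounded_eventually_nat
    ((summable_nat_pow_inv.2 one_lt_two).mul_left ρ⁻¹) ?_
  filter_upwards [hlim.eventually_le_const one_pos, eventually_ge_atTop 1] with m hm hm1
  have hm0 : (0 : ℝ) < m := by exact_mod_cast hm1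
  rw [Real.norm_of_nonneg (by positivity)]
  calc (m : ℝ) * ρ ^ ⌊(m : ℝ) ^ δ⌋₊ ≤ m * (ρ⁻¹ * exp (-b * (m : ℝ) ^ δ)) := by
        gcongr
        exact hpow _ (by positivity)
    _ = ρ⁻¹ * ((m : ℝ) ^ 3 * exp (-b * (m : ℝ) ^ δ) / (m : ℝ) ^ 2) := by
        field_simp
    _ ≤ ρ⁻¹ * ((m : ℝ) ^ 2)⁻¹ := by
        rw [div_eq_mul_inv]
        gcongr
        exact mul_le_of_le_one_left (by positivity) hm

lemma tendsto_rpow_neg_mul_of_le_rpow {a : ℕ → ℝ} {γ δ C : ℝ} (hγδ : γ < δ)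
    (ha0 : ∀ m, 0 ≤ a m) (ha : ∀ᶠ m in atTop, a m ≤ C * (m : ℝ) ^ γ) :
    Tendsto (fun m : ℕ => (m : ℝ) ^ (-δ) * a m) atTop (nhds 0) := by
  have hlim : Tendsto (fun m : ℕ => C * (m : ℝ) ^ (γ - δ)) atTop (nhds 0) := by
    simpa using ((tendsto_rpow_neg_atTop (sub_pos.2 hγδ)).comp
      tendsto_natCast_atTop_atTop).const_mul C
  refine squeeze_zero' (Eventually.of_forall fun m =>
    mul_nonneg (rpow_nonneg m.cast_nonneg _) (ha0 m)) ?_ hlim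
  filter_upwards [ha, eventually_gt_atTop 0] with m hm hm0
  calc (m : ℝ) ^ (-δ) * a m ≤ (m : ℝ) ^ (-δ) * (C * (m : ℝ) ^ γ) := by gcongr
    _ = C * (m : ℝ) ^ (γ - δ) := by
      rw [sub_eq_add_neg, rpow_add (by exact_mod_cast hm0)]
      ring

section FirstHit

variable {Ω : Type*} {ξ : ℕ → Ω → ℝ}

def firstHit (ξ : ℕ → Ω → ℝ) (I : Set ℝ) (k : ℕ) : Set Ω :=
  partialSum ξ k ⁻¹' I ∩ ⋂ l < k, partialSum ξ l ⁻¹' Iᶜ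

lemma pairwise_disjoint_firstHit (ξ : ℕ → Ω → ℝ) (I : Set ℝ) :
    Pairwise (Function.onFun Disjoint (firstHit ξ I)) := by
  intro a b hab
  refine Set.disjoint_left.2 ?_
  rintro ω ⟨ha, ha'⟩ ⟨hb, hb'⟩
  simp only [Set.mem_iInter] at ha' hb'
  rcases hab.lt_or_gt with h | h
  · exact hb' a h ha
  · exact ha' b h hb

lemma measurableSet_firstHit {m : MeasurableSpace Ω} {I : Set ℝ} (hI : MeasurableSet I) {k : ℕ}
    (hS : ∀ l ≤ k, Measurable (partialSum ξ l)) : MeasurableSet (firstHit ξ I k) :=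
  (hS k le_rfl hI).inter <| MeasurableSet.iInter fun l => MeasurableSet.iInter fun hl =>
    hS l hl.le hI.compl

lemma exists_mem_firstHit_sum_Ico_le {ω : Ω} (hξ : ∀ i, 0 < ξ i ω) {j r : ℕ}
    (h : (r + 1 : ℝ≥0∞) ≤ renewalIncr ξ j ω) :
    ∃ k, ω ∈ firstHit ξ (Set.Ioc (j : ℝ) (j + 1)) k ∧
      ∑ i ∈ Finset.Ico k (k + r), ξ i ω ≤ 1 := by
  set W := {k | partialSum ξ k ω ∈ Set.Ioc (j : ℝ) (j + 1)}
  have hW : (r + 1 : ℕ∞) ≤ W.encard := by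
    rw [renewalIncr_eq_encard] at h
    refine ENat.toENNReal_le.1 (le_of_eq_of_le ?_ h)
    norm_cast
  have hne : ∃ k, k ∈ W := Set.nonempty_of_encard_ne_zero (lt_of_lt_of_le (by simp) hW).ne'
  refine ⟨Nat.find hne, ⟨Nat.find_spec hne, Set.mem_iInter₂.2 fun l hl => Nat.find_min hne hl⟩, ?_⟩
  obtain ⟨k', hk'W, hk'⟩ : ∃ k' ∈ W, Nat.find hne + r ≤ k' := by
    by_contra! hlt
    have hsub : W ⊆ ↑(Finset.Ico (Nat.find hne) (Nat.find hne + r)) := fun k hk =>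
      Finset.mem_Ico.2 ⟨Nat.find_min' hne hk, hlt k hk⟩
    have := (Set.encard_le_encard hsub).trans_eq (Set.encard_coe_eq_coe_finsetCard _)
    simp only [Nat.card_Ico, add_tsub_cancel_left] at this
    have := hW.trans this
    norm_cast at this
    omega
  rw [Finset.sum_Ico_eq_sub _ (Nat.le_add_right _ _)]
  have hmono := (partialSum_strictMono hξ).monotone hk'
  have h1 : partialSum ξ k' ω ≤ j + 1 := hk'W.2
  have h2 : (j : ℝ) < partialSum ξ (Nat.find hne) ω := (Nat.find_spec hne).1
  simp only [partialSum] at hmono h1 h2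
  linarith

lemma measurable_sum_iSup_comap {S : Set ℕ} {t : Finset ℕ} (ht : ∀ i ∈ t, i ∈ S) :
    Measurable[⨆ i ∈ S, MeasurableSpace.comap (ξ i) inferInstance] fun ω => ∑ i ∈ t, ξ i ω :=
  Finset.measurable_sum t fun i hi => (comap_measurable (ξ i)).mono
    (le_iSup₂ (f := fun i _ => MeasurableSpace.comap (ξ i) inferInstance) i (ht i hi)) le_rfl

end FirstHit

section Tail

variable {Ω : Type*} [MeasurableSpace Ω] {μ : Measure Ω} {ξ : ℕ → Ω → ℝ}

lemma measure_firstHit_inter_sum_Ico (hξ : ∀ i, Measurable (ξ i)) (hind : iIndepFun ξ μ)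
    {I : Set ℝ} (hI : MeasurableSet I) (k r : ℕ) (a : ℝ) :
    μ (firstHit ξ I k ∩ {ω | ∑ i ∈ Finset.Ico k (k + r), ξ i ω ≤ a}) =
      μ (firstHit ξ I k) * μ {ω | ∑ i ∈ Finset.Ico k (k + r), ξ i ω ≤ a} := by
  have hindep := indep_iSup_of_disjoint (fun i => (hξ i).comap_le)
    ((iIndepFun_iff_iIndep _ _ μ).1 hind) (Set.Iio_disjoint_Ici (le_refl k))
  refine (Indep_iff _ _ μ).1 hindep _ _ ?_ ?_
  · exact measurableSet_firstHit hI fun l hl =>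
      measurable_sum_iSup_comap fun i hi => (Finset.mem_range.1 hi).trans_le hl
  · exact measurable_sum_iSup_comap (fun i hi => (Finset.mem_Ico.1 hi).1) measurableSet_Iic

lemma integrable_exp_mul_of_nonpos [IsFiniteMeasure μ] {X : Ω → ℝ} (hX : AEMeasurable X μ)
    (hnn : ∀ᵐ ω ∂μ, 0 ≤ X ω) {t : ℝ} (ht : t ≤ 0) : Integrable (fun ω => exp (t * X ω)) μ := by
  refine .of_mem_Icc 0 1 (measurable_exp.comp_aemeasurable (hX.const_mul t)) ?_
  filter_upwards [hnn] with ω hω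
  exact ⟨(exp_pos _).le, exp_le_one_iff.2 (mul_nonpos_of_nonpos_of_nonneg ht hω)⟩

lemma mgf_lt_one_of_pos [IsProbabilityMeasure μ] {X : Ω → ℝ} (hX : AEMeasurable X μ)
    (hpos : ∀ᵐ ω ∂μ, 0 < X ω) {t : ℝ} (ht : t < 0) : mgf X μ t < 1 := by
  have hint := integrable_exp_mul_of_nonpos hX (hpos.mono fun _ h => h.le) ht.le
  have hpos' : 0 < ∫ ω, (1 - exp (t * X ω)) ∂μ := by
    rw [integral_pos_iff_support_of_nonneg_ae (f := fun ω => 1 - exp (t * X ω)) ?_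
      ((integrable_const 1).sub hint)]
    · calc (0 : ℝ≥0∞) < μ Set.univ := by simp
        _ ≤ _ := measure_mono_ae <| by
          filter_upwards [hpos] with ω hω _
          exact sub_ne_zero.2 (exp_lt_one_iff.2 (mul_neg_of_neg_of_pos ht hω)).ne'
    · filter_upwards [hpos] with ω hω
      exact sub_nonneg.2 (exp_le_one_iff.2 (mul_neg_of_neg_of_pos ht hω).le)
  rw [integral_sub (integrable_const 1) hint, integral_const] at hpos'
  simpa only [probReal_univ, smul_eq_mul, one_mul, sub_pos, mgf] using hpos'

lemma measure_sum_le_le_exp_mul_mgf_pow [IsProbabilityMeasure μ] (hξ : ∀ i, Measurable (ξ i))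
    (hind : iIndepFun ξ μ) (hid : ∀ i, IdentDistrib (ξ i) (ξ 0) μ μ)
    (hnn : ∀ᵐ ω ∂μ, ∀ i, 0 ≤ ξ i ω) (t : Finset ℕ) (a : ℝ) :
    μ {ω | ∑ i ∈ t, ξ i ω ≤ a} ≤ ENNReal.ofReal (exp a * mgf (ξ 0) μ (-1) ^ t.card) := by
  have hint : Integrable (fun ω => exp (-1 * (∑ i ∈ t, ξ i) ω)) μ := by
    refine integrable_exp_mul_of_nonpos (by fun_prop) ?_ (by norm_num)
    filter_upwards [hnn] with ω hω
    simpa [Finset.sum_apply] using Finset.sum_nonneg fun i _ => hω i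
  have hchernoff := measure_le_le_exp_mul_mgf a (by norm_num) hint
  rw [hind.mgf_sum hξ, Finset.prod_congr rfl fun i _ => mgf_congr_of_identDistrib _ _ (hid i) _,
    Finset.prod_const] at hchernoff
  simp only [Finset.sum_apply, neg_neg, one_mul] at hchernoff
  rw [← ofReal_measureReal]
  exact ENNReal.ofReal_le_ofReal hchernoff

section IID

variable [IsProbabilityMeasure μ] (hξ : ∀ i, Measurable (ξ i)) (hind : iIndepFun ξ μ)
  (hid : ∀ i, IdentDistrib (ξ i) (ξ 0) μ μ) (hpos : ∀ᵐ ω ∂μ, ∀ i, 0 < ξ i ω)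
include hξ hind hid hpos

lemma measure_le_renewalIncr_le (j r : ℕ) :
    μ {ω | (r + 1 : ℝ≥0∞) ≤ renewalIncr ξ j ω} ≤
      ENNReal.ofReal (exp 1 * mgf (ξ 0) μ (-1) ^ r) := by
  set I := Set.Ioc (j : ℝ) (j + 1)
  set B : ℕ → Set Ω := fun k => {ω | ∑ i ∈ Finset.Ico k (k + r), ξ i ω ≤ 1}
  have hS : ∀ l, Measurable (partialSum ξ l) := fun l =>
    Finset.measurable_sum _ fun i _ => hξ i
  calc μ {ω | (r + 1 : ℝ≥0∞) ≤ renewalIncr ξ j ω}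
      ≤ μ (⋃ k, firstHit ξ I k ∩ B k) := measure_mono_ae <| by
        filter_upwards [hpos] with ω hω h
        exact Set.mem_iUnion.2 (exists_mem_firstHit_sum_Ico_le hω h)
    _ ≤ ∑' k, μ (firstHit ξ I k) * μ (B k) := by
        refine (measure_iUnion_le _).trans_eq (tsum_congr fun k => ?_)
        exact measure_firstHit_inter_sum_Ico hξ hind measurableSet_Ioc k r 1
    _ ≤ ∑' k, μ (firstHit ξ I k) * ENNReal.ofReal (exp 1 * mgf (ξ 0) μ (-1) ^ r) := by
        gcongr with k
        simpa using measure_sum_le_le_exp_mul_mgf_pow hξ hind hid (hpos.mono fun ω h i => (h i).le)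
          (Finset.Ico k (k + r)) 1
    _ = μ (⋃ k, firstHit ξ I k) * ENNReal.ofReal (exp 1 * mgf (ξ 0) μ (-1) ^ r) := by
        rw [ENNReal.tsum_mul_right, measure_iUnion (pairwise_disjoint_firstHit ξ I)
          fun k => measurableSet_firstHit measurableSet_Ioc fun l _ => hS l]
    _ ≤ _ := mul_le_of_le_one_left' prob_le_one

lemma ae_renewalIncr_ne_top : ∀ᵐ ω ∂μ, ∀ j, renewalIncr ξ j ω ≠ ∞ := by
  refine ae_all_iff.2 fun j => ae_iff.2 (le_antisymm ?_ zero_le)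
  have hρ : mgf (ξ 0) μ (-1) < 1 :=
    mgf_lt_one_of_pos (hξ 0).aemeasurable (hpos.mono fun ω h => h 0) (by norm_num)
  have hlim : Tendsto (fun r : ℕ => ENNReal.ofReal (exp 1 * mgf (ξ 0) μ (-1) ^ r)) atTop
      (nhds 0) := by
    simpa using ENNReal.tendsto_ofReal
      ((tendsto_pow_atTop_nhds_zero_of_lt_one mgf_nonneg hρ).const_mul (exp 1))
  refine ge_of_tendsto' hlim fun r => le_trans (measure_mono fun ω hω => ?_)
    (measure_le_renewalIncr_le hξ hind hid hpos j r)
  exact le_top.trans_eq (not_ne_iff.1 hω).symm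

lemma ae_eventually_renewalIncr_le {δ : ℝ} (hδ : 0 < δ) :
    ∀ᵐ ω ∂μ, ∀ᶠ m : ℕ in atTop, ∀ j < m,
      renewalIncr ξ j ω ≤ ENNReal.ofReal ((m : ℝ) ^ δ + 1) := by
  set ρ := mgf (ξ 0) μ (-1)
  have hρ0 : 0 < ρ := mgf_pos <|
    integrable_exp_mul_of_nonpos (hξ 0).aemeasurable (hpos.mono fun _ h => (h 0).le) (by norm_num)
  have hρ1 : ρ < 1 := mgf_lt_one_of_pos (hξ 0).aemeasurable (hpos.mono fun _ h => h 0) (by norm_num)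
  set r : ℕ → ℕ := fun m => ⌊(m : ℝ) ^ δ⌋₊
  set E : ℕ → Set Ω := fun m =>
    ⋃ j ∈ Finset.range m, {ω | (r m + 1 : ℝ≥0∞) ≤ renewalIncr ξ j ω}
  have hE : ∀ m, μ (E m) ≤ ENNReal.ofReal (exp 1 * ((m : ℝ) * ρ ^ r m)) := fun m =>
    calc μ (E m) ≤ ∑ j ∈ Finset.range m, μ {ω | (r m + 1 : ℝ≥0∞) ≤ renewalIncr ξ j ω} :=
          measure_biUnion_finset_le _ _
      _ ≤ ∑ j ∈ Finset.range m, ENNReal.ofReal (exp 1 * ρ ^ r m) :=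
          Finset.sum_le_sum fun j _ => measure_le_renewalIncr_le hξ hind hid hpos j (r m)
      _ = ENNReal.ofReal (exp 1 * ((m : ℝ) * ρ ^ r m)) := by
          rw [Finset.sum_const, Finset.card_range, nsmul_eq_mul, ← ENNReal.ofReal_natCast,
            ← ENNReal.ofReal_mul m.cast_nonneg]
          ring_nf
  have hsum : ∑' m, μ (E m) ≠ ∞ := ne_top_of_le_ne_top
    ((summable_mul_pow_floor_rpow hρ0 hρ1 hδ).mul_left (exp 1)).tsum_ofReal_ne_top
    (ENNReal.tsum_le_tsum hE)
  filter_upwards [ae_eventually_notMem hsum] with ω hω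
  filter_upwards [hω] with m hm j hj
  have hlt : renewalIncr ξ j ω < r m + 1 :=
    not_le.1 fun h => hm (Set.mem_biUnion (Finset.mem_range.2 hj) h)
  refine hlt.le.trans ?_
  rw [← ENNReal.ofReal_natCast, ← ENNReal.ofReal_one,
    ← ENNReal.ofReal_add (by positivity) zero_le_one]
  exact ENNReal.ofReal_le_ofReal (by linarith [Nat.floor_le (rpow_nonneg m.cast_nonneg δ)])

end IID

end Tail

theorem stmt_16 {Ω : Type*} [MeasurableSpace Ω] (μ : Measure Ω) [IsProbabilityMeasure μ]
    (ξ η : ℕ → Ω → ℝ) (hmeas : ∀ i, Measurable (fun ω => (ξ i ω, η i ω)))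
    (hpos : ∀ i, ∀ᵐ ω ∂μ, 0 < ξ i ω ∧ 0 < η i ω)
    (hindep : iIndepFun (fun i ω => (ξ i ω, η i ω)) μ)
    (hid : ∀ i, IdentDistrib (fun ω => (ξ i ω, η i ω)) (fun ω => (ξ 0 ω, η 0 ω)) μ μ)
    (F : ℝ → ℝ) (hF : ∀ x, F x = (μ {ω | η 0 ω ≤ x}).toReal) :
    (∀ᵐ ω ∂μ, ∀ m : ℕ, ∀ hm : 1 ≤ m,
      prwJ ξ F m ω ≤ 1 + 2 * (Finset.range m).sup'
        (Finset.nonempty_range_iff.mpr (Nat.one_le_iff_ne_zero.mp hm))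
        (fun k => (renewalIncr ξ k ω).toReal)) ∧
    (∀ δ : ℝ, 0 < δ → ∀ᵐ ω ∂μ, Tendsto
      (fun m : ℕ => (m : ℝ) ^ (-δ) * prwJ ξ F m ω) atTop (nhds 0)) := by
  have hξ : ∀ i, Measurable (ξ i) := fun i => (hmeas i).fst
  have hind : iIndepFun ξ μ := hindep.comp (fun _ => Prod.fst) fun _ => measurable_fst
  have hidξ : ∀ i, IdentDistrib (ξ i) (ξ 0) μ μ := fun i => (hid i).comp measurable_fst
  have hξpos : ∀ᵐ ω ∂μ, ∀ i, 0 < ξ i ω := ae_all_iff.2 fun i => (hpos i).mono fun _ h => h.1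
  have hFm : Monotone F := fun x y hxy => by
    simp only [hF]
    exact ENNReal.toReal_mono (measure_ne_top _ _) (measure_mono fun ω hω => le_trans hω hxy)
  have hF0 : ∀ x, 0 ≤ F x := fun x => hF x ▸ ENNReal.toReal_nonneg
  have hF1 : ∀ x, F x ≤ 1 := fun x => hF x ▸ measureReal_le_one
  refine ⟨?_, fun δ hδ => ?_⟩
  · filter_upwards [hξpos, ae_renewalIncr_ne_top hξ hind hidξ hξpos] with ω hω hfin m hm
    refine prwJ_le hFm hF0 hF1 hω
      (ENNReal.toReal_nonneg.trans (Finset.le_sup' (fun k => (renewalIncr ξ k ω).toReal)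
        (Finset.mem_range.2 hm))) fun j hj => ?_
    rw [← ENNReal.ofReal_toReal (hfin j)]
    exact ENNReal.ofReal_le_ofReal (Finset.le_sup' (fun k => (renewalIncr ξ k ω).toReal)
      (Finset.mem_range.2 hj))
  · filter_upwards [hξpos, ae_eventually_renewalIncr_le hξ hind hidξ hξpos (half_pos hδ)]
      with ω hω hbound
    refine tendsto_rpow_neg_mul_of_le_rpow (C := 5) (half_lt_self hδ)
      (fun m => prwJ_nonneg hFm m) ?_
    filter_upwards [hbound, eventually_ge_atTop 1] with m hm hm1
    have hpow : 1 ≤ (m : ℝ) ^ (δ / 2) := one_le_rpow (by exact_mod_cast hm1) (by positivity)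
    linarith [prwJ_le hFm hF0 hF1 hω (by positivity) hm]
end
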